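/- arXiv:2207.13911 — 5 statements merged into one kernel-verified Lean document; each statement's English description precedes it below -/
import Mathlib

section
/- Let g be a finite abelian group and let C be the set of subgroups H of g such that the quotient g/H is cyclic. Let A and A' be two families of positive real numbers indexed by C. If for every subgroup N of g one has ∏_{H ∈ C, N ≤ H} A'(H) = ∏_{H ∈ C, N ≤ H} A(H), then A'(H) = A(H) for every H ∈ C. -/
/-! This is Möbius inversion over the finite poset of subgroups: descending from the maximal
indices, the equation at `N = H` determines the factor at `H` once all factors strictly above
`H` are known, since their (nonzero) product can be cancelled. -/

open Finset

open scoped Classical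

theorem prod_filter_le_eq_mul_prod_filter_lt {α M : Type*} [PartialOrder α] [Fintype α]
    [CommMonoid M] (P : α → Prop) {a : α} (ha : P a) (u : α → M) :
    ∏ b ∈ univ.filter (fun b => P b ∧ a ≤ b), u b =
      u a * ∏ b ∈ univ.filter (fun b => P b ∧ a < b), u b := by
  have hinsert : univ.filter (fun b => P b ∧ a ≤ b) =
      insert a (univ.filter (fun b => P b ∧ a < b)) := by
    ext b
    simp only [mem_filter, mem_univ, true_and, mem_insert, le_iff_lt_or_eq (a := a)]
    grind
  rw [hinsert, prod_insert (by simp)]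

theorem eq_of_forall_prod_filter_le_eq {α M : Type*} [PartialOrder α] [Fintype α]
    [CommMonoidWithZero M] [IsRightCancelMulZero M] [Nontrivial M] (P : α → Prop)
    {f f' : α → M} (hf : ∀ a, P a → f a ≠ 0)
    (h : ∀ a, P a → ∏ b ∈ univ.filter (fun b => P b ∧ a ≤ b), f' b =
      ∏ b ∈ univ.filter (fun b => P b ∧ a ≤ b), f b) :
    ∀ a, P a → f' a = f a := by
  have : WellFoundedGT α := Finite.to_wellFoundedGT
  intro a
  induction a using WellFoundedGT.induction with
  | _ a ih =>
    intro ha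
    have hupper : ∏ b ∈ univ.filter (fun b => P b ∧ a < b), f' b =
        ∏ b ∈ univ.filter (fun b => P b ∧ a < b), f b :=
      prod_congr rfl fun b hb => by
        obtain ⟨hPb, hab⟩ := (mem_filter.mp hb).2
        exact ih b hab hPb
    have hnonzero : ∏ b ∈ univ.filter (fun b => P b ∧ a < b), f b ≠ 0 :=
      prod_ne_zero_iff.mpr fun b hb => hf b (mem_filter.mp hb).2.1
    have key := h a ha
    rw [prod_filter_le_eq_mul_prod_filter_lt P ha, prod_filter_le_eq_mul_prod_filter_lt P ha,
      hupper] at key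
    exact mul_right_cancel₀ hnonzero key

theorem chevalley_rational_components_general (g : Type*) [CommGroup g] [Fintype g]
    (A A' : Subgroup g → ℝ)
    (hA : ∀ H : Subgroup g, IsCyclic (g ⧸ H) → 0 < A H)
    (hprod : ∀ N : Subgroup g,
      ∏ H ∈ Finset.univ.filter (fun H : Subgroup g => IsCyclic (g ⧸ H) ∧ N ≤ H), A' H =
      ∏ H ∈ Finset.univ.filter (fun H : Subgroup g => IsCyclic (g ⧸ H) ∧ N ≤ H), A H) :
    ∀ H : Subgroup g, IsCyclic (g ⧸ H) → A' H = A H :=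
  eq_of_forall_prod_filter_le_eq (fun H => IsCyclic (g ⧸ H)) (fun H hH => (hA H hH).ne')
    fun N _ => hprod N

/-- If two families of positive reals indexed by the subgroups `H` of a finite abelian group `g`
with cyclic quotient `g ⧸ H` (i.e. by the irreducible rational characters of a corresponding
abelian field) have, for every subgroup `N` (i.e. every subfield), equal products over the
indices `H ⊇ N`, then the two families coincide. -/
theorem chevalley_rational_components (g : Type*) [CommGroup g] [Fintype g]
    (A A' : Subgroup g → ℝ)
    (hA : ∀ H : Subgroup g, IsCyclic (g ⧸ H) → 0 < A H)
    (hA' : ∀ H : Subgroup g, IsCyclic (g ⧸ H) → 0 < A' H)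
    (hprod : ∀ N : Subgroup g,
      ∏ H ∈ Finset.univ.filter (fun H : Subgroup g => IsCyclic (g ⧸ H) ∧ N ≤ H), A' H =
      ∏ H ∈ Finset.univ.filter (fun H : Subgroup g => IsCyclic (g ⧸ H) ∧ N ≤ H), A H) :
    ∀ H : Subgroup g, IsCyclic (g ⧸ H) → A' H = A H :=
  chevalley_rational_components_general g A A' hA hprod
end

section
/- Let m > 1 be an integer and ℓ a prime number not dividing m. Let ζ be a primitive (ℓ·m)-th root of unity in the cyclotomic field ℚ(ζ_{ℓm}), so that ζ_m := ζ^ℓ is a primitive m-th root of unity generating the subfield ℚ(ζ_m) of ℚ(ζ_{ℓm}). Let μ be a positive integer with μ·ℓ ≡ 1 (mod m). Then the relative field norm satisfies N_{ℚ(ζ_{ℓm})/ℚ(ζ_m)}(1 − ζ) · (1 − ζ_m^μ) = 1 − ζ_m; equivalently, N_{ℚ(ζ_{ℓm})/ℚ(ζ_m)}(1 − ζ) = (1 − ζ_m)^{1 − τ_ℓ^{−1}}, where τ_ℓ ∈ Gal(ℚ(ζ_m)/ℚ) is the Frobenius automorphism determined by ζ_m ↦ ζ_m^ℓ. -/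
/-!
Put `F = ℚ(ζ_m)` with `ζ_m = ζ ^ ℓ`. Since `ζ` generates `K` over `F`, the norm `N_{K/F}(1 - ζ)` is
the value at `1` of the minimal polynomial `P` of `ζ` over `F`, and the tower law gives
`deg P = φ(ℓm) / φ(m) = ℓ - 1`. Now `P` divides `X ^ ℓ - ζ_m`, which has the further root
`ζ_m ^ μ ∈ F` (because `μℓ ≡ 1 mod m`); this root is not `ζ`, as its `m`-th power is `1`. Comparing
degrees, `X ^ ℓ - ζ_m = (X - ζ_m ^ μ) · P`, and evaluating at `1` gives the theorem.
-/

open IntermediateField Polynomial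

theorem Polynomial.eq_X_sub_C_mul_of_dvd {R : Type*} [CommRing R] [IsDomain R] {f g : R[X]}
    (hf : f.Monic) (hg : g.Monic) (hgf : g ∣ f) (hdeg : f.natDegree = g.natDegree + 1) {b : R}
    (hfb : f.IsRoot b) (hgb : ¬ g.IsRoot b) : f = (X - C b) * g := by
  obtain ⟨r, rfl⟩ := hgf
  have hr : r.Monic := hg.of_mul_monic_left hf
  have hr1 : r.natDegree = 1 := by rw [hg.natDegree_mul hr] at hdeg; omega
  have hbr : X - C b ∣ r :=
    ((prime_X_sub_C b).dvd_or_dvd (dvd_iff_isRoot.2 hfb)).resolve_left (mt dvd_iff_isRoot.1 hgb)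
  rw [mul_comm, eq_of_monic_of_dvd_of_natDegree_le (monic_X_sub_C b) hr hbr (by simp [hr1])]

theorem PowerBasis.norm_algebraMap_sub_gen {K L : Type*} [CommRing K] [CommRing L] [Algebra K L]
    (pb : PowerBasis K L) (a : K) :
    Algebra.norm K (algebraMap K L a - pb.gen) = (minpoly K pb.gen).eval a := by
  rw [Algebra.norm_eq_matrix_det pb.basis, ← charpoly_leftMulMatrix, Matrix.eval_charpoly,
    map_sub, AlgHom.commutes, Matrix.algebraMap_eq_diagonal]
  rfl

theorem Nat.Prime.pos_of_coprime {ℓ m : ℕ} (hℓ : ℓ.Prime) (hcop : ℓ.Coprime m) : 0 < m :=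
  Nat.pos_of_ne_zero fun h => hℓ.ne_one (by simpa [h] using hcop)

theorem Algebra.adjoin_eq_top_of_adjoin_eq_top (R S : Type*) {A : Type*} [CommSemiring R]
    [CommSemiring S] [Semiring A] [Algebra R S] [Algebra S A] [Algebra R A] [IsScalarTower R S A]
    {s : Set A} (hs : Algebra.adjoin R s = ⊤) : Algebra.adjoin S s = ⊤ := by
  rw [← Algebra.adjoin_adjoin_of_tower R, hs, Algebra.coe_top, Algebra.adjoin_univ]

namespace IsPrimitiveRoot

section Over

variable {k K : Type*} [Field k] [Field K] [Algebra k K] {n : ℕ} [NeZero n]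
  [IsCyclotomicExtension {n} k K] {ζ : K}

noncomputable def powerBasisOver (hζ : IsPrimitiveRoot ζ n) (F : IntermediateField k K) :
    PowerBasis F K :=
  PowerBasis.ofAdjoinEqTop' (hζ.isIntegral (NeZero.pos n)).tower_top <|
    Algebra.adjoin_eq_top_of_adjoin_eq_top k F
      (IsCyclotomicExtension.adjoin_primitive_root_eq_top hζ)

@[simp]
theorem powerBasisOver_gen (hζ : IsPrimitiveRoot ζ n) (F : IntermediateField k K) :
    (hζ.powerBasisOver F).gen = ζ :=
  PowerBasis.ofAdjoinEqTop'_gen _ _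

theorem natDegree_minpoly_eq_finrank (hζ : IsPrimitiveRoot ζ n) (F : IntermediateField k K) :
    (minpoly F ζ).natDegree = Module.finrank F K := by
  rw [(hζ.powerBasisOver F).finrank]
  rfl

theorem norm_one_sub_eq_eval_minpoly (hζ : IsPrimitiveRoot ζ n) (F : IntermediateField k K) :
    Algebra.norm F (1 - ζ) = (minpoly F ζ).eval 1 := by
  simpa using (hζ.powerBasisOver F).norm_algebraMap_sub_gen 1

end Over

variable {K : Type*} [Field K] [Algebra ℚ K] {ℓ m : ℕ} [IsCyclotomicExtension {ℓ * m} ℚ K]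
  {ζ : K}

theorem finrank_adjoin_pow (hζ : IsPrimitiveRoot ζ (ℓ * m)) (hℓ : ℓ.Prime) (hcop : ℓ.Coprime m) :
    Module.finrank ℚ⟮ζ ^ ℓ⟯ K = ℓ - 1 := by
  have hm := hℓ.pos_of_coprime hcop
  have : NeZero m := ⟨hm.ne'⟩
  have : NeZero (ℓ * m) := ⟨Nat.mul_ne_zero hℓ.ne_zero hm.ne'⟩
  have hζm : IsPrimitiveRoot (ζ ^ ℓ) m := hζ.pow (Nat.mul_pos hℓ.pos hm) rfl
  have htower := Module.finrank_mul_finrank ℚ ℚ⟮ζ ^ ℓ⟯ K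
  rw [adjoin.finrank (hζm.isIntegral hm).tower_top,
    ← hζm.minpoly_eq_cyclotomic_of_irreducible (cyclotomic.irreducible_rat hm),
    natDegree_cyclotomic, IsCyclotomicExtension.finrank K (cyclotomic.irreducible_rat
      (NeZero.pos (ℓ * m))), Nat.totient_mul hcop, Nat.totient_prime hℓ, mul_comm] at htower
  exact Nat.eq_of_mul_eq_mul_right (Nat.totient_pos.2 hm) htower

theorem X_pow_sub_C_eq_mul_minpoly (hζ : IsPrimitiveRoot ζ (ℓ * m)) (hℓ : ℓ.Prime)
    (hcop : ℓ.Coprime m) {μ : ℕ} (hμ : μ * ℓ ≡ 1 [MOD m]) :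
    X ^ ℓ - C (AdjoinSimple.gen ℚ (ζ ^ ℓ)) =
      (X - C (AdjoinSimple.gen ℚ (ζ ^ ℓ) ^ μ)) * minpoly ℚ⟮ζ ^ ℓ⟯ ζ := by
  have hm := hℓ.pos_of_coprime hcop
  have : NeZero (ℓ * m) := ⟨Nat.mul_ne_zero hℓ.ne_zero hm.ne'⟩
  have hζm : IsPrimitiveRoot (ζ ^ ℓ) m := hζ.pow (Nat.mul_pos hℓ.pos hm) rfl
  have hint : IsIntegral ℚ⟮ζ ^ ℓ⟯ ζ := (hζ.isIntegral (NeZero.pos _)).tower_top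
  have hgen : AdjoinSimple.gen ℚ (ζ ^ ℓ) ^ m = 1 := Subtype.ext (by simpa using hζm.pow_eq_one)
  have hroot : (AdjoinSimple.gen ℚ (ζ ^ ℓ) ^ μ) ^ ℓ = AdjoinSimple.gen ℚ (ζ ^ ℓ) := by
    rw [← pow_mul, pow_eq_pow_of_modEq hμ hgen, pow_one]
  refine Polynomial.eq_X_sub_C_mul_of_dvd (monic_X_pow_sub_C _ hℓ.ne_zero) (minpoly.monic hint)
    (minpoly.dvd _ _ (by simp)) ?_ (by simp [hroot]) fun h => ?_
  · rw [natDegree_X_pow_sub_C, hζ.natDegree_minpoly_eq_finrank, hζ.finrank_adjoin_pow hℓ hcop]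
    have := hℓ.one_lt
    omega
  · have hζ_eq := minpoly.root hint h
    refine hζ.pow_ne_one_of_pos_of_lt hm.ne' (lt_mul_left hm hℓ.one_lt) ?_
    rw [← hζ_eq, ← map_pow, ← pow_mul, mul_comm, pow_mul, hgen, one_pow, map_one]

end IsPrimitiveRoot

theorem norm_one_sub_zeta_of_not_dvd_general (m ℓ : ℕ+)
    (hℓ : (ℓ : ℕ).Prime) (hnd : ¬ (ℓ : ℕ) ∣ (m : ℕ))
    (K : Type*) [Field K] [Algebra ℚ K] [IsCyclotomicExtension {((ℓ * m : ℕ+) : ℕ)} ℚ K]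
    (ζ : K) (hζ : IsPrimitiveRoot ζ (↑(ℓ * m) : ℕ))
    (μ : ℕ) (hμℓ : μ * (ℓ : ℕ) ≡ 1 [MOD (m : ℕ)]) :
    Algebra.norm ℚ⟮ζ ^ (ℓ : ℕ)⟯ (1 - ζ) *
        (1 - (⟨ζ ^ (ℓ : ℕ), IntermediateField.mem_adjoin_simple_self ℚ (ζ ^ (ℓ : ℕ))⟩ :
          ℚ⟮ζ ^ (ℓ : ℕ)⟯) ^ μ) =
      1 - (⟨ζ ^ (ℓ : ℕ), IntermediateField.mem_adjoin_simple_self ℚ (ζ ^ (ℓ : ℕ))⟩ :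
          ℚ⟮ζ ^ (ℓ : ℕ)⟯) := by
  rw [PNat.mul_coe] at hζ ‹IsCyclotomicExtension _ ℚ K›
  have hcop : (ℓ : ℕ).Coprime m := (Nat.Prime.coprime_iff_not_dvd hℓ).2 hnd
  have hfactor := congrArg (eval 1) (hζ.X_pow_sub_C_eq_mul_minpoly hℓ hcop hμℓ)
  rw [hζ.norm_one_sub_eq_eval_minpoly]
  simp only [eval_sub, eval_pow, eval_X, eval_C, eval_mul, one_pow] at hfactor
  exact (mul_comm _ _).trans hfactor.symm

/-- Norms of cyclotomic numbers, inductive step `ℓ ∤ m` :  in `ℚ(ζ_{ℓm})/ℚ(ζ_m)`, with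
`ζ` a primitive `ℓm`-th root of unity and `ζ_m = ζ^ℓ`, the norm of `1 - ζ` satisfies
`N(1 - ζ) · (1 - ζ_m^μ) = 1 - ζ_m`, where `μ·ℓ ≡ 1 (mod m)`, i.e.
`N(1 - ζ) = (1 - ζ_m)^{1 - τ_ℓ⁻¹}` for the Frobenius `τ_ℓ : ζ_m ↦ ζ_m^ℓ`. -/
theorem norm_one_sub_zeta_of_not_dvd (m ℓ : ℕ+) (hm : 1 < (m : ℕ))
    (hℓ : (ℓ : ℕ).Prime) (hnd : ¬ (ℓ : ℕ) ∣ (m : ℕ))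
    (K : Type*) [Field K] [Algebra ℚ K] [IsCyclotomicExtension {((ℓ * m : ℕ+) : ℕ)} ℚ K]
    (ζ : K) (hζ : IsPrimitiveRoot ζ (↑(ℓ * m) : ℕ))
    (μ : ℕ) (hμ : 0 < μ) (hμℓ : μ * (ℓ : ℕ) ≡ 1 [MOD (m : ℕ)]) :
    Algebra.norm ℚ⟮ζ ^ (ℓ : ℕ)⟯ (1 - ζ) *
        (1 - (⟨ζ ^ (ℓ : ℕ), IntermediateField.mem_adjoin_simple_self ℚ (ζ ^ (ℓ : ℕ))⟩ :
          ℚ⟮ζ ^ (ℓ : ℕ)⟯) ^ μ) =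
      1 - (⟨ζ ^ (ℓ : ℕ), IntermediateField.mem_adjoin_simple_self ℚ (ζ ^ (ℓ : ℕ))⟩ :
          ℚ⟮ζ ^ (ℓ : ℕ)⟯) :=
  norm_one_sub_zeta_of_not_dvd_general m ℓ hℓ hnd K ζ hζ μ hμℓ
end

section
/- Let m > 1 be an integer and ℓ a prime number dividing m. Let ζ be a primitive (ℓ·m)-th root of unity in the cyclotomic field ℚ(ζ_{ℓm}), so that ζ_m := ζ^ℓ is a primitive m-th root of unity generating the subfield ℚ(ζ_m) of ℚ(ζ_{ℓm}). Then the relative field norm satisfies N_{ℚ(ζ_{ℓm})/ℚ(ζ_m)}(1 − ζ) = 1 − ζ_m. -/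
/-!
Over `F = ℚ(ζ^ℓ)` the element `ζ` generates `K`, and since `ℓ ∣ m` the degree is
`[K : F] = φ(ℓm) / φ(m) = ℓ`. Hence the minimal polynomial of `ζ` over `F` is the polynomial
`X^ℓ - ζ^ℓ` it obviously satisfies, and it equals the characteristic polynomial of
multiplication by `ζ`. Evaluating that at `1` gives `N(1 - ζ) = 1 - ζ^ℓ`.
-/

open IntermediateField

open Module Polynomial

theorem Algebra.norm_algebraMap_sub_eq_eval_charpoly {R S : Type*} [CommRing R] [Ring S]
    [Algebra R S] [Module.Free R S] [Module.Finite R S] (a : R) (x : S) :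
    Algebra.norm R (algebraMap R S a - x) = (Algebra.lmul R S x).charpoly.eval a := by
  rw [LinearMap.eval_charpoly, Algebra.norm_apply, map_sub, Algebra.lmul_algebraMap]
  rfl

theorem Algebra.charpoly_lmul_eq_minpoly {F K : Type*} [Field F] [Field K] [Algebra F K]
    [FiniteDimensional F K] {x : K} (hx : F⟮x⟯ = ⊤) :
    (Algebra.lmul F K x).charpoly = minpoly F x := by
  have hint : IsIntegral F x := .of_finite F x
  refine eq_of_monic_of_dvd_of_natDegree_le (minpoly.monic hint)
    (LinearMap.charpoly_monic _) (minpoly.dvd F x (Algebra.aeval_self_charpoly_lmul x)) ?_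
  rw [LinearMap.charpoly_natDegree, ← adjoin.finrank hint, hx, finrank_top']

theorem minpoly.eq_X_pow_sub_C_of_finrank_adjoin {F K : Type*} [Field F] [Field K]
    [Algebra F K] [FiniteDimensional F K] {x : K} {n : ℕ} {c : F}
    (hxn : x ^ n = algebraMap F K c) (hdeg : finrank F F⟮x⟯ = n) :
    minpoly F x = X ^ n - C c := by
  have hint : IsIntegral F x := .of_finite F x
  have hn : n ≠ 0 := hdeg ▸ finrank_pos.ne'
  refine (minpoly.unique_of_degree_le_degree_minpoly F x (monic_X_pow_sub_C c hn)
    (by simp [hxn]) ?_).symm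
  rw [degree_X_pow_sub_C (Nat.pos_of_ne_zero hn), degree_eq_natDegree (minpoly.ne_zero hint),
    ← adjoin.finrank hint, hdeg]

theorem IntermediateField.adjoin_simple_eq_top_tower_top {F E K : Type*} [Field F] [Field E]
    [Field K] [Algebra F E] [Algebra F K] [Algebra E K] [IsScalarTower F E K] {x : K}
    (hx : F⟮x⟯ = ⊤) : E⟮x⟯ = ⊤ := by
  rw [← restrictScalars_eq_top_iff (K := F), eq_top_iff, ← hx, adjoin_simple_le_iff]
  exact mem_adjoin_simple_self E x

theorem IsPrimitiveRoot.finrank_rat_adjoin {K : Type*} [Field K] [Algebra ℚ K] {ζ : K} {n : ℕ}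
    (hζ : IsPrimitiveRoot ζ n) (hn : 0 < n) : finrank ℚ ℚ⟮ζ⟯ = n.totient := by
  have := charZero_of_injective_algebraMap (algebraMap ℚ K).injective
  obtain rfl : ‹Algebra ℚ K› = DivisionRing.toRatAlgebra := Subsingleton.elim _ _
  rw [adjoin.finrank (hζ.isIntegral hn).tower_top, ← cyclotomic_eq_minpoly_rat hζ hn,
    natDegree_cyclotomic]

theorem IsPrimitiveRoot.finrank_adjoin_pow_of_prime_dvd {K : Type*} [Field K] [Algebra ℚ K]
    {ζ : K} {p m : ℕ} (hζ : IsPrimitiveRoot ζ (p * m)) (hp : p.Prime) (hd : p ∣ m)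
    (hm : 0 < m) (htop : ℚ⟮ζ⟯ = ⊤) :
    finrank ℚ⟮ζ ^ p⟯ K = p := by
  have hpm : 0 < p * m := Nat.mul_pos hp.pos hm
  have hK : finrank ℚ K = (p * m).totient := by
    rw [← finrank_top', ← htop, hζ.finrank_rat_adjoin hpm]
  have : FiniteDimensional ℚ K := Module.finite_of_finrank_pos (hK ▸ Nat.totient_pos.2 hpm)
  have htower := finrank_mul_finrank ℚ ℚ⟮ζ ^ p⟯ K
  rw [(hζ.pow hpm rfl).finrank_rat_adjoin hm, hK, Nat.totient_mul_of_prime_of_dvd hp hd,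
    mul_comm p] at htower
  exact Nat.eq_of_mul_eq_mul_left (Nat.totient_pos.2 hm) htower

theorem norm_one_sub_zeta_of_dvd_general (m ℓ : ℕ+)
    (hℓ : (ℓ : ℕ).Prime) (hd : (ℓ : ℕ) ∣ (m : ℕ))
    (K : Type*) [Field K] [Algebra ℚ K] [IsCyclotomicExtension {(↑(ℓ * m) : ℕ)} ℚ K]
    (ζ : K) (hζ : IsPrimitiveRoot ζ (↑(ℓ * m) : ℕ)) :
    Algebra.norm ℚ⟮ζ ^ (ℓ : ℕ)⟯ (1 - ζ) =
      1 - (⟨ζ ^ (ℓ : ℕ), IntermediateField.mem_adjoin_simple_self ℚ (ζ ^ (ℓ : ℕ))⟩ :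
          ℚ⟮ζ ^ (ℓ : ℕ)⟯) := by
  set F := ℚ⟮ζ ^ (ℓ : ℕ)⟯
  have htop : ℚ⟮ζ⟯ = ⊤ :=
    adjoin_eq_top_of_algebra _ _ (IsCyclotomicExtension.adjoin_primitive_root_eq_top hζ)
  have hFK : finrank F K = ℓ :=
    (PNat.mul_coe ℓ m ▸ hζ).finrank_adjoin_pow_of_prime_dvd hℓ hd m.pos htop
  have : FiniteDimensional F K := Module.finite_of_finrank_pos (hFK ▸ ℓ.pos)
  have hFtop : F⟮ζ⟯ = ⊤ := adjoin_simple_eq_top_tower_top htop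
  have hmin : minpoly F ζ = X ^ (ℓ : ℕ) - C ⟨ζ ^ (ℓ : ℕ), mem_adjoin_simple_self ℚ _⟩ :=
    minpoly.eq_X_pow_sub_C_of_finrank_adjoin rfl (by rw [hFtop, finrank_top', hFK])
  calc Algebra.norm F (1 - ζ) = Algebra.norm F (algebraMap F K 1 - ζ) := by rw [map_one]
    _ = (Algebra.lmul F K ζ).charpoly.eval 1 := Algebra.norm_algebraMap_sub_eq_eval_charpoly _ _
    _ = _ := by rw [Algebra.charpoly_lmul_eq_minpoly hFtop, hmin]; simp

/-- Norms of cyclotomic numbers, inductive step `ℓ ∣ m` :  in `ℚ(ζ_{ℓm})/ℚ(ζ_m)`, with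
`ζ` a primitive `ℓm`-th root of unity and `ζ_m = ζ^ℓ`, the norm of `1 - ζ` equals `1 - ζ_m`. -/
theorem norm_one_sub_zeta_of_dvd (m ℓ : ℕ+) (hm : 1 < (m : ℕ))
    (hℓ : (ℓ : ℕ).Prime) (hd : (ℓ : ℕ) ∣ (m : ℕ))
    (K : Type*) [Field K] [Algebra ℚ K] [IsCyclotomicExtension {(↑(ℓ * m) : ℕ)} ℚ K]
    (ζ : K) (hζ : IsPrimitiveRoot ζ (↑(ℓ * m) : ℕ)) :
    Algebra.norm ℚ⟮ζ ^ (ℓ : ℕ)⟯ (1 - ζ) =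
      1 - (⟨ζ ^ (ℓ : ℕ), IntermediateField.mem_adjoin_simple_self ℚ (ζ ^ (ℓ : ℕ))⟩ :
          ℚ⟮ζ ^ (ℓ : ℕ)⟯) :=
  norm_one_sub_zeta_of_dvd_general m ℓ hℓ hd K ζ hζ
end

section
/- Let p be a prime, n ≥ 1, and let M be a finite abelian p-group equipped with an automorphism σ satisfying σ^{p^n} = id. If the fixed-point subgroup of σ equals the fixed-point subgroup of σ^p, i.e. {x ∈ M : σ(x) = x} = {x ∈ M : σ^p(x) = x}, then σ is the identity on M. -/
/-!
If `σ` moves some element, then `σ` induces an automorphism of `p`-power order of the nontrivial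
`p`-group `M ⧸ M^σ`, which therefore fixes a nontrivial class: there are `x` and `k ≠ 1` with
`σ k = k` and `σ x = x * k`. Replacing `x, k` by suitable powers we may take `k` of order `p`.
Then `σ ^ j x = x * k ^ j`, so `σ ^ p` fixes `x` while `σ` does not.
-/

open Subgroup QuotientGroup

namespace IsPGroup

variable {p : ℕ} [Fact p.Prime]

theorem exists_ne_one_forall_smul_eq {G Q : Type*} [Group G] [Group Q] [Finite Q]
    [Nontrivial Q] [MulDistribMulAction G Q] (hG : IsPGroup p G) (hQ : IsPGroup p Q) :
    ∃ q : Q, q ≠ 1 ∧ ∀ g : G, g • q = q := by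
  have hdvd : p ∣ Nat.card Q := hQ.card_eq_or_dvd.resolve_left Finite.one_lt_card.ne'
  obtain ⟨q, hq, hq1⟩ :=
    hG.exists_fixed_point_of_prime_dvd_card_of_fixed_point Q hdvd (a := 1) (smul_one ·)
  exact ⟨q, hq1.symm, hq⟩

theorem exists_ne_one_apply_eq_of_pow_eq_one {Q : Type*} [Group Q] [Finite Q] [Nontrivial Q]
    (hQ : IsPGroup p Q) {τ : MulAut Q} {n : ℕ} (hτ : τ ^ p ^ n = 1) :
    ∃ q : Q, q ≠ 1 ∧ τ q = q := by
  have hτp : IsPGroup p (zpowers τ) :=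
    of_card_dvd_pow (n := n) (Nat.card_zpowers τ ▸ orderOf_dvd_of_pow_eq_one hτ)
  obtain ⟨q, hq1, hq⟩ := exists_ne_one_forall_smul_eq hτp hQ
  exact ⟨q, hq1, hq ⟨τ, mem_zpowers τ⟩⟩

end IsPGroup

theorem QuotientGroup.congr_pow_apply_mk {G : Type*} [Group G] (N : Subgroup G) [N.Normal]
    (σ : G ≃* G) (hσ : N.map (σ : G →* G) = N) (m : ℕ) (x : G) :
    (congr N N σ hσ ^ m) (x : G ⧸ N) = ((σ ^ m) x : G) := by
  induction m generalizing x with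
  | zero => rfl
  | succ m ih => rw [pow_succ, MulAut.mul_apply, congr_mk, ih, pow_succ, MulAut.mul_apply]

theorem MulEquiv.map_eqLocus_id {G : Type*} [Group G] (σ : G ≃* G) :
    ((σ : G →* G).eqLocus (MonoidHom.id G)).map (σ : G →* G) =
      (σ : G →* G).eqLocus (MonoidHom.id G) := by
  ext y
  constructor
  · rintro ⟨x, hx, rfl⟩
    exact congrArg σ hx
  · intro hy
    exact ⟨y, hy, hy⟩

theorem pow_apply_eq_mul_pow {M : Type*} [Monoid M] {σ : M ≃* M} {x k : M} (hk : σ k = k)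
    (hx : σ x = x * k) (j : ℕ) : (σ ^ j) x = x * k ^ j := by
  induction j with
  | zero => simp
  | succ j ih => rw [pow_succ', MulAut.mul_apply, ih, map_mul, map_pow, hx, hk, mul_assoc,
      ← pow_succ']

theorem exists_apply_eq_mul_of_apply_ne {p n : ℕ} [Fact p.Prime] {M : Type*} [CommGroup M]
    [Finite M] (hM : IsPGroup p M) {σ : M ≃* M} (hσ : σ ^ p ^ n = 1) {x₀ : M}
    (hx₀ : σ x₀ ≠ x₀) : ∃ x k : M, σ k = k ∧ k ≠ 1 ∧ σ x = x * k := by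
  set K := (σ : M →* M).eqLocus (MonoidHom.id M)
  set τ := congr K K σ σ.map_eqLocus_id
  have : Nontrivial (M ⧸ K) := ⟨⟨x₀, 1, (eq_one_iff x₀).not.mpr hx₀⟩⟩
  have hτ : τ ^ p ^ n = 1 := by
    ext q
    induction q using QuotientGroup.induction_on with
    | H x => rw [congr_pow_apply_mk, hσ]; rfl
  obtain ⟨q, hq1, hq⟩ := (hM.to_quotient K).exists_ne_one_apply_eq_of_pow_eq_one hτ
  obtain ⟨x, rfl⟩ := mk_surjective q
  rw [congr_mk, eq_iff_div_mem] at hq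
  refine ⟨x, σ x / x, hq, fun h => hq1 ((eq_one_iff x).mpr (div_eq_one.mp h)), ?_⟩
  rw [mul_div_cancel]

theorem fixed_points_eq_pow_p_implies_id_general (p n : ℕ) (hp : p.Prime)
    (M : Type*) [CommGroup M] [Finite M] (hM : IsPGroup p M)
    (σ : M ≃* M) (hσ : σ ^ (p ^ n) = 1)
    (hfix : {x : M | σ x = x} = {x : M | (σ ^ p) x = x}) :
    ∀ x : M, σ x = x := by
  have : Fact p.Prime := ⟨hp⟩
  by_contra! ⟨x₀, hx₀⟩
  obtain ⟨x, k, hk, hk1, hx⟩ := exists_apply_eq_mul_of_apply_ne hM hσ hx₀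
  set m := orderOf k / p
  have hord : orderOf (k ^ m) = p :=
    orderOf_pow_orderOf_div (hM.isOfFinOrder hp.ne_zero k).orderOf_pos.ne' (hM.dvd_orderOf hk1)
  have hkm : σ (k ^ m) = k ^ m := by rw [map_pow, hk]
  have hxm : σ (x ^ m) = x ^ m * k ^ m := by rw [map_pow, hx, mul_pow]
  have hfixp : (σ ^ p) (x ^ m) = x ^ m := by
    rw [pow_apply_eq_mul_pow hkm hxm, ← hord, pow_orderOf_eq_one, mul_one]
  have hfix1 : σ (x ^ m) = x ^ m := (Set.ext_iff.mp hfix _).mpr hfixp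
  rw [hxm, mul_eq_left, ← orderOf_eq_one_iff, hord] at hfix1
  exact hp.one_lt.ne' hfix1

/-- Let `M` be a finite abelian `p`-group with an automorphism `σ` with `σ ^ (p ^ n) = 1`.
If the fixed points of `σ` coincide with the fixed points of `σ ^ p`, then `σ` is the
identity on `M`. -/
theorem fixed_points_eq_pow_p_implies_id (p n : ℕ) (hp : p.Prime) (hn : 1 ≤ n)
    (M : Type*) [CommGroup M] [Finite M] (hM : IsPGroup p M)
    (σ : M ≃* M) (hσ : σ ^ (p ^ n) = 1)
    (hfix : {x : M | σ x = x} = {x : M | (σ ^ p) x = x}) :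
    ∀ x : M, σ x = x :=
  fixed_points_eq_pow_p_implies_id_general p n hp M hM σ hσ hfix
end

section
/- Let p be a prime, k ≥ 1, and let G be a cyclic group of order p^k acting on a finite abelian p-group M such that the image of the algebraic norm ν(x) = ∑_{g ∈ G} g·x equals the fixed subgroup M^G. Then Card(M) ≥ Card(M^G) · Card((M^G)[p^k]), where (M^G)[p^k] is the p^k-torsion subgroup of M^G. In particular, Card(M) ≥ Card(M^G) · p^{min(k, e)·r}, where p^e is the exponent and r the p-rank (minimal number of generators) of M^G. -/
variable (G : Type*) [Group G] (M : Type*) [AddCommGroup M] [DistribMulAction G M]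

/-- The subgroup of `G`-fixed points of `M`. -/
def fixedAddSubgroup : AddSubgroup M where
  carrier := {x : M | ∀ g : G, g • x = x}
  zero_mem' := fun g => smul_zero g
  add_mem' := by
    intro x y hx hy g
    rw [smul_add, hx g, hy g]
  neg_mem' := by
    intro x hx g
    rw [smul_neg, hx g]

/-- The `d`-torsion subgroup of the `G`-fixed points `Mᴳ`. -/
def fixedTorsion (d : ℕ) : AddSubgroup M where
  carrier := {x : M | (∀ g : G, g • x = x) ∧ d • x = 0}
  zero_mem' := ⟨fun g => smul_zero g, smul_zero d⟩
  add_mem' := by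
    rintro x y ⟨hx, hx'⟩ ⟨hy, hy'⟩
    exact ⟨fun g => by rw [smul_add, hx g, hy g], by rw [smul_add, hx', hy', add_zero]⟩
  neg_mem' := by
    rintro x ⟨hx, hx'⟩
    exact ⟨fun g => by rw [smul_neg, hx g], by rw [smul_neg, hx', neg_zero]⟩

/-! Fix a generator `σ` of `G` and put `N n = ∑ i < n, σ ^ i`, so that `ν = N (p ^ k)`. The
images `Aⱼ = N (p ^ j) M` decrease from `M` to `ν M = Mᴳ`, and `Aⱼ₊₁` is the image of `Aⱼ` under
`∑ i < p, σ ^ (p ^ j * i)`, which acts on `Mᴳ[p] ⊆ Aⱼ` as multiplication by `p`, i.e. as zero. Hence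
`#Aⱼ ≥ #Mᴳ[p] · #Aⱼ₊₁` and `#M ≥ #Mᴳ[p] ^ k · #Mᴳ`. Finally `p ^ r ≤ #(Mᴳ / p Mᴳ) = #Mᴳ[p]`, because
lifts of an `𝔽ₚ`-basis of `Mᴳ / p Mᴳ` generate the `p`-group `Mᴳ`. The first inequality is simply
`#M = #ker ν · #Mᴳ` with `Mᴳ[p ^ k] ⊆ ker ν`. -/

open Finset

theorem geom_sum_range_mul {R : Type*} [Semiring R] (x : R) (n m : ℕ) :
    ∑ i ∈ range (n * m), x ^ i = (∑ i ∈ range m, (x ^ n) ^ i) * ∑ i ∈ range n, x ^ i := by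
  induction m with
  | zero => simp
  | succ m ih =>
    rw [Nat.mul_succ, sum_range_add, ih, sum_range_succ, add_mul, mul_sum]
    congr 1
    simp only [pow_add, pow_mul, mul_sum]

theorem geom_sum_range_mul' {R : Type*} [Semiring R] (x : R) (n m : ℕ) :
    ∑ i ∈ range (n * m), x ^ i = (∑ i ∈ range n, x ^ i) * ∑ i ∈ range m, (x ^ n) ^ i := by
  rw [geom_sum_range_mul]
  exact Commute.sum_left _ _ _ fun i _ => Commute.sum_right _ _ _ fun j _ =>
    ((Commute.pow_pow_self x n j).pow_left i)

theorem Nat.pow_mul_le_of_forall_mul_le {a : ℕ → ℕ} {c k : ℕ}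
    (h : ∀ j < k, c * a (j + 1) ≤ a j) : c ^ k * a k ≤ a 0 := by
  induction k with
  | zero => simp
  | succ k ih =>
    calc c ^ (k + 1) * a (k + 1) = c ^ k * (c * a (k + 1)) := by ring
      _ ≤ c ^ k * a k := Nat.mul_le_mul_left _ (h k k.lt_succ_self)
      _ ≤ a 0 := ih fun j hj => h j (hj.trans k.lt_succ_self)

theorem AddSubgroup.card_mul_card_map_le {A B : Type*} [AddGroup A] [AddGroup B] [Finite A]
    (f : A →+ B) {H K : AddSubgroup A} (hKH : K ≤ H) (hKf : K ≤ f.ker) :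
    Nat.card K * Nat.card (H.map f) ≤ Nat.card H := by
  rw [← AddMonoidHom.domRestrict_range, ← AddSubgroup.index_ker]
  refine (Nat.mul_le_mul_right _ ?_).trans (AddSubgroup.card_mul_index _).le
  refine Nat.card_le_card_of_injective (fun x => ⟨⟨x, hKH x.2⟩, hKf x.2⟩) fun x y hxy => ?_
  exact Subtype.ext (congrArg (fun z => ((z.1 : H) : A)) hxy)

theorem AddSubgroup.card_mul_card_range_le {A B : Type*} [AddGroup A] [AddGroup B] [Finite A]
    (f : A →+ B) {K : AddSubgroup A} (hKf : K ≤ f.ker) :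
    Nat.card K * Nat.card f.range ≤ Nat.card A := by
  simpa [← AddMonoidHom.range_eq_map] using card_mul_card_map_le f le_top hKf

section PartialNorm

variable {G}

def partialNorm (σ : G) (n : ℕ) : M →+ M :=
  ∑ i ∈ range n, DistribSMul.toAddMonoidHom M (σ ^ i)

variable {M}

theorem partialNorm_apply (σ : G) (n : ℕ) (x : M) :
    partialNorm M σ n x = ∑ i ∈ range n, σ ^ i • x := by
  simp [partialNorm]

theorem partialNorm_one (σ : G) : partialNorm M σ 1 = AddMonoidHom.id M := by
  ext x
  simp [partialNorm_apply]

theorem partialNorm_mul (σ : G) (n m : ℕ) :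
    partialNorm M σ (n * m) = (partialNorm M (σ ^ n) m).comp (partialNorm M σ n) := by
  -- an identity in the ring `AddMonoid.End M`, whose product is `AddMonoidHom.comp`
  have h := geom_sum_range_mul (DistribMulAction.toAddMonoidEnd G M σ) n m
  simp only [← map_pow] at h
  exact h

theorem partialNorm_mul' (σ : G) (n m : ℕ) :
    partialNorm M σ (n * m) = (partialNorm M σ n).comp (partialNorm M (σ ^ n) m) := by
  have h := geom_sum_range_mul' (DistribMulAction.toAddMonoidEnd G M σ) n m
  simp only [← map_pow] at h
  exact h

theorem partialNorm_apply_of_mem_fixed (σ : G) (n : ℕ) {x : M}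
    (hx : x ∈ fixedAddSubgroup G M) : partialNorm M σ n x = n • x := by
  simp [partialNorm_apply, fun i => hx (σ ^ i)]

theorem partialNorm_card_apply [Fintype G] {σ : G} (hσ : ∀ g, g ∈ Subgroup.zpowers σ) (x : M) :
    partialNorm M σ (Nat.card G) x = ∑ g : G, g • x := by
  classical
  rw [partialNorm_apply, ← IsCyclic.image_range_card hσ, sum_image]
  rw [← orderOf_eq_card_of_forall_mem_zpowers hσ]
  exact fun i hi j hj => pow_injOn_Iio_orderOf (mem_range.1 hi) (mem_range.1 hj)

theorem coe_range_partialNorm_card [Fintype G] {σ : G} (hσ : ∀ g, g ∈ Subgroup.zpowers σ) :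
    ((partialNorm M σ (Nat.card G)).range : Set M) = Set.range fun x : M => ∑ g : G, g • x := by
  rw [AddMonoidHom.coe_range]
  exact congrArg Set.range (funext (partialNorm_card_apply hσ))

theorem range_partialNorm_mul (σ : G) (n m : ℕ) :
    (partialNorm M σ (n * m)).range = (partialNorm M σ n).range.map (partialNorm M (σ ^ n) m) := by
  rw [partialNorm_mul, AddMonoidHom.range_comp]

theorem range_partialNorm_mul_le (σ : G) (n m : ℕ) :
    (partialNorm M σ (n * m)).range ≤ (partialNorm M σ n).range := by
  rw [partialNorm_mul', AddMonoidHom.range_comp]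
  exact AddSubgroup.map_le_range _ _

theorem card_fixedTorsion_mul_card_range_partialNorm_le [Finite M] (σ : G) (n : ℕ) :
    Nat.card (fixedTorsion G M n) * Nat.card (partialNorm M σ n).range ≤ Nat.card M := by
  refine AddSubgroup.card_mul_card_range_le _ fun x hx => ?_
  change partialNorm M σ n x = 0
  rw [partialNorm_apply_of_mem_fixed _ _ hx.1]
  exact hx.2

theorem pow_card_mul_card_range_partialNorm_le [Finite M] (σ : G) (p k : ℕ) {K : AddSubgroup M}
    (hKfix : K ≤ fixedAddSubgroup G M) (hKp : ∀ x ∈ K, p • x = 0)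
    (hK : K ≤ (partialNorm M σ (p ^ k)).range) :
    Nat.card K ^ k * Nat.card (partialNorm M σ (p ^ k)).range ≤ Nat.card M := by
  have step : ∀ j < k, Nat.card K * Nat.card (partialNorm M σ (p ^ (j + 1))).range
      ≤ Nat.card (partialNorm M σ (p ^ j)).range := by
    intro j hj
    rw [pow_succ, range_partialNorm_mul]
    refine AddSubgroup.card_mul_card_map_le _ (hK.trans ?_) fun x hx => ?_
    · rw [← Nat.add_sub_cancel' hj.le, pow_add]
      exact range_partialNorm_mul_le _ _ _
    · change partialNorm M (σ ^ p ^ j) p x = 0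
      rw [partialNorm_apply_of_mem_fixed _ _ (hKfix hx)]
      exact hKp x hx
  have range_zero : (partialNorm M σ (p ^ 0)).range = ⊤ := by
    rw [pow_zero, partialNorm_one]
    exact AddMonoidHom.range_eq_top.2 Function.surjective_id
  calc Nat.card K ^ k * Nat.card (partialNorm M σ (p ^ k)).range
      ≤ Nat.card (partialNorm M σ (p ^ 0)).range :=
        Nat.pow_mul_le_of_forall_mul_le
          (a := fun j => Nat.card (partialNorm M σ (p ^ j)).range) step
    _ = Nat.card M := by rw [range_zero, AddSubgroup.card_top]

end PartialNorm

theorem ZModModule.exists_closure_eq_top_pow_card_eq {p : ℕ} [Fact p.Prime] {V : Type*}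
    [AddCommGroup V] [Module (ZMod p) V] [Finite V] :
    ∃ s : Finset V, AddSubgroup.closure (s : Set V) = ⊤ ∧ p ^ s.card = Nat.card V := by
  classical
  have : Fintype V := Fintype.ofFinite V
  let b := Module.Free.chooseBasis (ZMod p) V
  refine ⟨univ.image b, ?_, ?_⟩
  · have h : Submodule.span (ZMod p) (Set.range b)
        ≤ AddSubgroup.toZModSubmodule p (AddSubgroup.closure (Set.range b)) :=
      Submodule.span_le.2 AddSubgroup.subset_closure
    rw [b.span_eq, top_le_iff] at h
    rw [coe_image, coe_univ, Set.image_univ]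
    exact (AddSubgroup.toZModSubmodule p).injective (h.trans (map_top _).symm)
  · rw [card_image_of_injective _ b.injective, card_univ, Nat.card_eq_fintype_card,
      Module.card_fintype b, ZMod.card]

section PGroup

variable {A : Type*} [AddCommGroup A] [Finite A] {p : ℕ}

theorem AddSubgroup.eq_top_of_sup_range_nsmul_eq_top (hA : ∀ a : A, ∃ j, p ^ j • a = 0)
    {B : AddSubgroup A} (hB : B ⊔ (nsmulAddMonoidHom p : A →+ A).range = ⊤) : B = ⊤ := by
  -- `p •` is onto, hence injective, on the finite group `A ⧸ B`, but some `p ^ j •` kills `a`.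
  have hsurj : Function.Surjective (fun q : A ⧸ B => p • q) := by
    intro q
    induction q using QuotientAddGroup.induction_on with | H a =>
    obtain ⟨b, hb, _, ⟨c, rfl⟩, rfl⟩ := AddSubgroup.mem_sup.1 (hB ▸ AddSubgroup.mem_top a)
    refine ⟨(c : A ⧸ B), ?_⟩
    change ((p • c : A) : A ⧸ B) = ((b + p • c : A) : A ⧸ B)
    rw [QuotientAddGroup.eq]
    simpa using hb
  have hinj := fun j => (Finite.injective_iff_surjective.2 hsurj).iterate j
  refine eq_top_iff.2 fun a _ => ?_
  obtain ⟨j, hj⟩ := hA a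
  rw [← QuotientAddGroup.eq_zero_iff]
  apply hinj j
  simp [smul_iterate, ← QuotientAddGroup.mk_nsmul, hj]

theorem exists_closure_eq_top_pow_card_le_card_ker_nsmul (hp : p.Prime)
    (hA : ∀ a : A, ∃ j, p ^ j • a = 0) :
    ∃ s : Finset A, AddSubgroup.closure (s : Set A) = ⊤ ∧
      p ^ s.card ≤ Nat.card (nsmulAddMonoidHom p : A →+ A).ker := by
  classical
  have := Fact.mk hp
  set P := (nsmulAddMonoidHom p : A →+ A).range
  let _ : Module (ZMod p) (A ⧸ P) := AddCommGroup.zmodModule fun q => by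
    induction q using QuotientAddGroup.induction_on with | H a =>
    exact (QuotientAddGroup.eq_zero_iff _).2 ⟨a, rfl⟩
  obtain ⟨t, ht, card_t⟩ := ZModModule.exists_closure_eq_top_pow_card_eq (p := p) (V := A ⧸ P)
  have card_quotient : Nat.card (A ⧸ P) = Nat.card (nsmulAddMonoidHom p : A →+ A).ker := by
    have h := (AddSubgroup.card_mul_index P).trans
      (AddSubgroup.card_mul_index (nsmulAddMonoidHom p : A →+ A).ker).symm
    rw [AddSubgroup.index_ker, mul_comm _ (Nat.card P)] at h
    exact Nat.eq_of_mul_eq_mul_left Nat.card_pos h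
  refine ⟨t.image Quotient.out, AddSubgroup.eq_top_of_sup_range_nsmul_eq_top hA ?_, ?_⟩
  · have h := AddSubgroup.comap_map_eq (QuotientAddGroup.mk' P)
      (AddSubgroup.closure (t.image Quotient.out : Set A))
    rw [QuotientAddGroup.ker_mk', AddMonoidHom.map_closure] at h
    have himage : QuotientAddGroup.mk' P '' (t.image Quotient.out : Set A) = t := by
      simp [Set.image_image]
    rw [← h, himage, ht, AddSubgroup.comap_top]
  · calc p ^ (t.image Quotient.out).card ≤ p ^ t.card := Nat.pow_le_pow_right hp.pos card_image_le
      _ = Nat.card (nsmulAddMonoidHom p : A →+ A).ker := by rw [card_t, card_quotient]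

end PGroup

theorem card_fixedTorsion_eq_card_ker_nsmul (d : ℕ) :
    Nat.card (fixedTorsion G M d)
      = Nat.card (nsmulAddMonoidHom d : fixedAddSubgroup G M →+ fixedAddSubgroup G M).ker :=
  Nat.card_congr
    { toFun := fun x => ⟨⟨x, x.2.1⟩, Subtype.ext x.2.2⟩
      invFun := fun x => ⟨x.1.1, x.1.2, congrArg Subtype.val x.2⟩
      left_inv := fun _ => rfl
      right_inv := fun _ => rfl }

theorem norm_image_fixed_growth (p : ℕ) (hp : p.Prime) (k : ℕ)
    [IsCyclic G] [Fintype G] (hG : Fintype.card G = p ^ k)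
    [Finite M] (hpM : ∀ x : M, ∃ j : ℕ, p ^ j • x = 0)
    (hν : Set.range (fun x : M => ∑ g : G, g • x) = (fixedAddSubgroup G M : Set M))
    (e : ℕ)
    (r : ℕ) (hr : IsLeast {n : ℕ | ∃ s : Finset (fixedAddSubgroup G M),
      s.card = n ∧ AddSubgroup.closure (s : Set (fixedAddSubgroup G M)) = ⊤} r) :
    Nat.card M ≥ Nat.card (fixedAddSubgroup G M) * Nat.card (fixedTorsion G M (p ^ k)) ∧
      Nat.card M ≥ Nat.card (fixedAddSubgroup G M) * p ^ (min k e * r) := by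
  obtain ⟨σ, hσ⟩ := IsCyclic.exists_generator (α := G)
  have range_norm : (partialNorm M σ (p ^ k)).range = fixedAddSubgroup G M := by
    rw [← hG, ← Nat.card_eq_fintype_card]
    exact SetLike.ext' ((coe_range_partialNorm_card hσ).trans hν)
  have fixed_growth : Nat.card (fixedTorsion G M p) ^ k * Nat.card (fixedAddSubgroup G M)
      ≤ Nat.card M :=
    range_norm ▸ pow_card_mul_card_range_partialNorm_le σ p k (fun x hx => hx.1)
      (fun x hx => hx.2) (range_norm ▸ fun x hx => hx.1)
  have rank_le : p ^ r ≤ Nat.card (fixedTorsion G M p) := by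
    obtain ⟨s, hs, card_s⟩ := exists_closure_eq_top_pow_card_le_card_ker_nsmul hp
      (A := fixedAddSubgroup G M) fun x => (hpM x).imp fun j hj => Subtype.ext hj
    rw [card_fixedTorsion_eq_card_ker_nsmul]
    exact (Nat.pow_le_pow_right hp.pos (hr.2 ⟨s, rfl, hs⟩)).trans card_s
  refine ⟨?_, ?_⟩
  · simpa only [mul_comm, range_norm] using
      card_fixedTorsion_mul_card_range_partialNorm_le (M := M) σ (p ^ k)
  · calc Nat.card (fixedAddSubgroup G M) * p ^ (min k e * r)
        ≤ Nat.card (fixedAddSubgroup G M) * (p ^ r) ^ k := by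
          rw [← pow_mul, mul_comm r]
          gcongr
          exacts [hp.pos, min_le_left k e]
      _ ≤ Nat.card (fixedAddSubgroup G M) * Nat.card (fixedTorsion G M p) ^ k := by gcongr
      _ ≤ Nat.card M := by rw [mul_comm]; exact fixed_growth
end
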